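/- arXiv:2402.08818 — 4 statements merged into one kernel-verified Lean document; each statement's English description precedes it below -/
import Mathlib

section
/- Let E : ℝⁿ → ℝ be twice continuously differentiable with gradient g, and let U ⊆ ℝⁿ be an open corridor for E. If θ ∈ U and the segment {θ - s • g(θ) : s ∈ [0, t]} lies in U, then the gradient is constant along this line of steepest descent: g(θ - t • g(θ)) = g(θ). -/
/-!
The set of times `s ∈ [0, t]` at which `g(θ - s • g(θ)) = g(θ)` is closed and contains `0`, so
it suffices to show that it is open. Near a point `p = θ - s₀ • g(θ)` of it, run the gradient flow
from `p` (Picard–Lindelöf, since `g` is `C¹`). In the corridor this flow is a straight line, whose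
velocity at time `0` is `-g(p) = -g(θ)`; so the flow is `s ↦ p - s • g(θ)`, and since its velocity
is `-g` of its position, `g` equals `g(θ)` along it.
-/

/-- An open set `U ⊆ ℝⁿ` is a *corridor* for `E` if every solution of the gradient flow
`θ'(t) = -∇E(θ(t))` whose image lies in `U` is a straight line traveled at constant speed,
i.e. satisfies `θ(t) = θ(a) + (t - a) • v` for some fixed vector `v`. -/
def IsCorridor {n : ℕ} (E : EuclideanSpace ℝ (Fin n) → ℝ)
    (U : Set (EuclideanSpace ℝ (Fin n))) : Prop :=
  ∀ (a b : ℝ), a ≤ b → ∀ θ : ℝ → EuclideanSpace ℝ (Fin n),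
    (∀ t ∈ Set.Icc a b, HasDerivAt θ (-(gradient E (θ t))) t) →
    (∀ t ∈ Set.Icc a b, θ t ∈ U) →
    ∃ v : EuclideanSpace ℝ (Fin n), ∀ t ∈ Set.Icc a b, θ t = θ a + (t - a) • v

open Set Filter Topology

theorem ContDiff.gradient {F : Type*} [NormedAddCommGroup F] [InnerProductSpace ℝ F]
    [CompleteSpace F] {f : F → ℝ} {m n : WithTop ℕ∞} (hf : ContDiff ℝ n f) (hmn : m + 1 ≤ n) :
    ContDiff ℝ m (gradient f) :=
  (InnerProductSpace.toDual ℝ F).symm.contDiff.comp (hf.fderiv_right hmn)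

theorem hasDerivAt_of_eqOn_Icc_line {F : Type*} [NormedAddCommGroup F] [NormedSpace ℝ F]
    {f : ℝ → F} {a b t : ℝ} {x v : F} (hf : ∀ s ∈ Icc a b, f s = x + s • v)
    (ht : t ∈ Ioo a b) : HasDerivAt f v t := by
  have hline : HasDerivAt (fun s : ℝ => x + s • v) v t := by
    simpa using ((hasDerivAt_id t).smul_const v).const_add x
  exact hline.congr_of_eventuallyEq (eventually_of_mem (Icc_mem_nhds ht.1 ht.2) hf)

theorem IsCorridor.eventually_gradient_eq {n : ℕ} {E : EuclideanSpace ℝ (Fin n) → ℝ}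
    {U : Set (EuclideanSpace ℝ (Fin n))} (hcor : IsCorridor E U) (hE : ContDiff ℝ 2 E)
    (hU : IsOpen U) {p : EuclideanSpace ℝ (Fin n)} (hp : p ∈ U) :
    ∀ᶠ s in 𝓝 (0 : ℝ), gradient E (p - s • gradient E p) = gradient E p := by
  obtain ⟨f, hf0, ε, hε, hflow⟩ :=
    ((hE.gradient (by norm_num : (1 : WithTop ℕ∞) + 1 ≤ 2)).neg.contDiffAt (x := p)
      ).exists_forall_mem_closedBall_exists_eq_forall_mem_Ioo_hasDerivAt₀ 0
  have hflowU : ∀ᶠ s in 𝓝 0, f s ∈ U ∧ s ∈ Ioo (0 - ε) (0 + ε) :=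
    Eventually.and ((hflow 0 (by simpa using hε)).continuousAt.preimage_mem_nhds
      (hU.mem_nhds (hf0 ▸ hp))) (Ioo_mem_nhds (by linarith) (by linarith))
  obtain ⟨a, b, hab, habN, habU⟩ := exists_Icc_mem_subset_of_mem_nhds hflowU
  obtain ⟨v, hv⟩ := hcor a b (hab.1.trans hab.2) f (fun s hs => hflow s (habU hs).2)
    fun s hs => (habU hs).1
  have hline : ∀ s ∈ Icc a b, f s = (f a - a • v) + s • v := fun s hs => by
    rw [hv s hs]; module
  have hvel : ∀ s ∈ Ioo a b, -gradient E (f s) = v := fun s hs =>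
    (hflow s (habU (Ioo_subset_Icc_self hs)).2).unique (hasDerivAt_of_eqOn_Icc_line hline hs)
  have h0 : (0 : ℝ) ∈ Ioo a b := by simpa using mem_interior_iff_mem_nhds.mpr habN
  have hv0 : v = -gradient E p := by rw [← hvel 0 h0, hf0]
  have hstart : f a - a • v = p := by
    simpa [hf0] using (hline 0 (Ioo_subset_Icc_self h0)).symm
  filter_upwards [Ioo_mem_nhds h0.1 h0.2] with s hs
  have hfs : f s = p - s • gradient E p := by
    rw [hline s (Ioo_subset_Icc_self hs), hstart, hv0, smul_neg, sub_eq_add_neg]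
  rw [← hfs, ← neg_neg (gradient E (f s)), hvel s hs, hv0, neg_neg]

theorem gradient_constant_on_steepest_descent_line_general {n : ℕ}
    (E : EuclideanSpace ℝ (Fin n) → ℝ) (hE : ContDiff ℝ 2 E)
    (U : Set (EuclideanSpace ℝ (Fin n))) (hU : IsOpen U) (hcor : IsCorridor E U)
    (θ : EuclideanSpace ℝ (Fin n))
    (t : ℝ) (ht : 0 ≤ t)
    (hseg : ∀ s ∈ Set.Icc (0 : ℝ) t, θ - s • gradient E θ ∈ U) :
    gradient E (θ - t • gradient E θ) = gradient E θ := by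
  set G := gradient E θ
  have hclosed : IsClosed ({s : ℝ | gradient E (θ - s • G) = G} ∩ Icc 0 t) :=
    (isClosed_eq ((hE.gradient (by norm_num : (0 : WithTop ℕ∞) + 1 ≤ 2)).continuous.comp
      (by fun_prop)) continuous_const).inter isClosed_Icc
  refine hclosed.Icc_subset_of_forall_mem_nhdsWithin (by simp [G]) (fun s ⟨hs, hsI⟩ => ?_)
    ⟨ht, le_rfl⟩
  have hlocal := hcor.eventually_gradient_eq hE hU (hseg s (Ico_subset_Icc_self hsI))
  rw [show gradient E (θ - s • G) = G from hs] at hlocal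
  refine mem_nhdsWithin_of_mem_nhds ?_
  filter_upwards [((continuous_sub_right s).tendsto' s 0 (sub_self s)).eventually hlocal]
    with u hu
  convert hu using 2
  module

/-- Let `U` be an open corridor for a twice continuously differentiable
loss `E` with gradient `g`. If `θ ∈ U` and the segment `{θ - s • g(θ) : s ∈ [0, t]}` lies in
`U`, then the gradient is constant along this line of steepest descent:
`g(θ - t • g(θ)) = g(θ)`. -/
theorem gradient_constant_on_steepest_descent_line {n : ℕ}
    (E : EuclideanSpace ℝ (Fin n) → ℝ) (hE : ContDiff ℝ 2 E)
    (U : Set (EuclideanSpace ℝ (Fin n))) (hU : IsOpen U) (hcor : IsCorridor E U)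
    (θ : EuclideanSpace ℝ (Fin n)) (hθ : θ ∈ U)
    (t : ℝ) (ht : 0 ≤ t)
    (hseg : ∀ s ∈ Set.Icc (0 : ℝ) t, θ - s • gradient E θ ∈ U) :
    gradient E (θ - t • gradient E θ) = gradient E θ :=
  gradient_constant_on_steepest_descent_line_general E hE U hU hcor θ t ht hseg
end

section
/- Let E : ℝⁿ → ℝ be twice continuously differentiable with gradient g, let U ⊆ ℝⁿ be an open corridor for E, let h > 0 and θ ∈ U. Define the fourth-order Runge–Kutta (RK4) step for the gradient flow: k₁ = -g(θ), k₂ = -g(θ + (h/2) • k₁), k₃ = -g(θ + (h/2) • k₂), k₄ = -g(θ + h • k₃), and θ' = θ + (h/6) • (k₁ + 2k₂ + 2k₃ + k₄). If the segments {θ + s • k₁ : s ∈ [0, h/2]}, {θ + s • k₂ : s ∈ [0, h/2]}, and {θ + s • k₃ : s ∈ [0, h]} lie in U, then k₁ = k₂ = k₃ = k₄ = -g(θ) and the RK4 step coincides with the gradient descent step: θ' = θ - h • g(θ). -/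
open Set Filter Topology

namespace IsCorridor

variable {n : ℕ} {E : EuclideanSpace ℝ (Fin n) → ℝ} {U : Set (EuclideanSpace ℝ (Fin n))}

theorem exists_gradient_eq_neg {a b : ℝ} {f : ℝ → EuclideanSpace ℝ (Fin n)}
    (hcor : IsCorridor E U) (hab : a ≤ b)
    (hf : ∀ t ∈ Icc a b, HasDerivAt f (-(gradient E (f t))) t) (hfU : ∀ t ∈ Icc a b, f t ∈ U) :
    ∃ v, ∀ t ∈ Ioo a b, f t = f a + (t - a) • v ∧ gradient E (f t) = -v := by
  obtain ⟨v, hv⟩ := hcor a b hab f hf hfU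
  refine ⟨v, fun t ht => ⟨hv t (Ioo_subset_Icc_self ht), ?_⟩⟩
  have hline : HasDerivAt (fun u => f a + (u - a) • v) v t := by
    simpa using (((hasDerivAt_id t).sub_const a).smul_const v).const_add (f a)
  have hfv : HasDerivAt f v t :=
    hline.congr_of_eventuallyEq (eventually_of_mem (Icc_mem_nhds ht.1 ht.2) hv)
  rw [← (hf t (Ioo_subset_Icc_self ht)).unique hfv, neg_neg]

theorem eventually_gradient_eq_neg (hcor : IsCorridor E U) (hU : IsOpen U)
    (hg : ContDiff ℝ 1 (gradient E)) {p k : EuclideanSpace ℝ (Fin n)} {x : ℝ}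
    (hxU : p + x • k ∈ U) (hx : gradient E (p + x • k) = -k) :
    ∀ᶠ s in 𝓝 x, gradient E (p + s • k) = -k := by
  obtain ⟨f, hfx, ε, hε, hf⟩ :=
    hg.neg.contDiffAt.exists_forall_mem_closedBall_exists_eq_forall_mem_Ioo_hasDerivAt₀
      (x₀ := p + x • k) x
  have hgood : ∀ᶠ t in 𝓝 x, t ∈ Ioo (x - ε) (x + ε) ∧ f t ∈ U :=
    Filter.Eventually.and (Ioo_mem_nhds (by linarith) (by linarith))
      ((hf x ⟨by linarith, by linarith⟩).continuousAt.preimage_mem_nhds (hU.mem_nhds (hfx ▸ hxU)))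
  obtain ⟨a, b, -, hab_nhds, hab⟩ := exists_Icc_mem_subset_of_mem_nhds hgood
  have hxab : x ∈ Ioo a b := by simpa using mem_interior_iff_mem_nhds.2 hab_nhds
  obtain ⟨v, hv⟩ := hcor.exists_gradient_eq_neg (hxab.1.trans hxab.2).le
    (fun t ht => hf t (hab ht).1) (fun t ht => (hab ht).2)
  have hvk : v = k := by
    have := (hv x hxab).2
    rwa [hfx, hx, neg_inj, eq_comm] at this
  subst hvk
  have hfa : f a = p + x • v - (x - a) • v := eq_sub_of_add_eq ((hv x hxab).1.symm.trans hfx)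
  filter_upwards [Ioo_mem_nhds hxab.1 hxab.2] with t ht
  obtain ⟨hft, hgt⟩ := hv t ht
  rwa [hft, hfa, show p + x • v - (x - a) • v + (t - a) • v = p + t • v by module] at hgt

theorem gradient_eq_neg_on_segment (hcor : IsCorridor E U) (hU : IsOpen U)
    (hg : ContDiff ℝ 1 (gradient E)) {p k : EuclideanSpace ℝ (Fin n)} (hp : gradient E p = -k)
    {T : ℝ} (hseg : ∀ s ∈ Icc (0 : ℝ) T, p + s • k ∈ U) :
    ∀ s ∈ Icc (0 : ℝ) T, gradient E (p + s • k) = -k := by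
  let S : Set ℝ := {s | gradient E (p + s • k) = -k}
  have hS : IsClosed S :=
    isClosed_eq (hg.continuous.comp (by fun_prop)) continuous_const
  refine (hS.inter isClosed_Icc).Icc_subset_of_forall_mem_nhdsWithin (by simpa [S] using hp) ?_
  rintro x ⟨hxS, hx⟩
  exact mem_nhdsWithin_of_mem_nhds
    (hcor.eventually_gradient_eq_neg hU hg (hseg x (Ico_subset_Icc_self hx)) hxS)

end IsCorridor

theorem rk4_in_corridor_general {n : ℕ}
    (E : EuclideanSpace ℝ (Fin n) → ℝ) (hE : ContDiff ℝ 2 E)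
    (U : Set (EuclideanSpace ℝ (Fin n))) (hU : IsOpen U) (hcor : IsCorridor E U)
    (h : ℝ) (hh : 0 < h)
    (θ : EuclideanSpace ℝ (Fin n))
    (k1 k2 k3 k4 : EuclideanSpace ℝ (Fin n))
    (hk1 : k1 = -(gradient E θ))
    (hk2 : k2 = -(gradient E (θ + (h / 2) • k1)))
    (hk3 : k3 = -(gradient E (θ + (h / 2) • k2)))
    (hk4 : k4 = -(gradient E (θ + h • k3)))
    (hseg1 : ∀ s ∈ Set.Icc (0 : ℝ) (h / 2), θ + s • k1 ∈ U)
    (hseg2 : ∀ s ∈ Set.Icc (0 : ℝ) (h / 2), θ + s • k2 ∈ U)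
    (hseg3 : ∀ s ∈ Set.Icc (0 : ℝ) h, θ + s • k3 ∈ U) :
    k1 = -(gradient E θ) ∧ k2 = -(gradient E θ) ∧
    k3 = -(gradient E θ) ∧ k4 = -(gradient E θ) ∧
    θ + (h / 6) • (k1 + (2 : ℝ) • k2 + (2 : ℝ) • k3 + k4) = θ - h • gradient E θ := by
  have hg : ContDiff ℝ 1 (gradient E) := hE.gradient (by norm_num)
  have hhalf : h / 2 ∈ Icc (0 : ℝ) (h / 2) := ⟨by positivity, le_rfl⟩
  have hθ1 : gradient E θ = -k1 := by rw [hk1, neg_neg]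
  have hk21 : k2 = k1 := by
    rw [hk2, hcor.gradient_eq_neg_on_segment hU hg hθ1 hseg1 _ hhalf, neg_neg]
  have hk31 : k3 = k1 := by
    rw [hk3, hcor.gradient_eq_neg_on_segment hU hg (hk21 ▸ hθ1) hseg2 _ hhalf, hk21, neg_neg]
  have hk41 : k4 = k1 := by
    rw [hk4, hcor.gradient_eq_neg_on_segment hU hg (hk31 ▸ hθ1) hseg3 _ ⟨hh.le, le_rfl⟩, hk31,
      neg_neg]
  subst hk21 hk31 hk41 hk1
  exact ⟨rfl, rfl, rfl, rfl, by module⟩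

/-- **RK4 in corridors.** Let `U` be an open corridor for `E`, `h > 0` and
`θ ∈ U`. Define the RK4 step for the gradient flow: `k₁ = -g(θ)`,
`k₂ = -g(θ + (h/2) • k₁)`, `k₃ = -g(θ + (h/2) • k₂)`, `k₄ = -g(θ + h • k₃)`, and
`θ' = θ + (h/6) • (k₁ + 2k₂ + 2k₃ + k₄)`. If the segments `{θ + s • k₁ : s ∈ [0, h/2]}`,
`{θ + s • k₂ : s ∈ [0, h/2]}`, and `{θ + s • k₃ : s ∈ [0, h]}` lie in `U`, then
`k₁ = k₂ = k₃ = k₄ = -g(θ)` and the RK4 step coincides with the gradient descent step: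
`θ' = θ - h • g(θ)`. -/
theorem rk4_in_corridor {n : ℕ}
    (E : EuclideanSpace ℝ (Fin n) → ℝ) (hE : ContDiff ℝ 2 E)
    (U : Set (EuclideanSpace ℝ (Fin n))) (hU : IsOpen U) (hcor : IsCorridor E U)
    (h : ℝ) (hh : 0 < h)
    (θ : EuclideanSpace ℝ (Fin n)) (hθ : θ ∈ U)
    (k1 k2 k3 k4 : EuclideanSpace ℝ (Fin n))
    (hk1 : k1 = -(gradient E θ))
    (hk2 : k2 = -(gradient E (θ + (h / 2) • k1)))
    (hk3 : k3 = -(gradient E (θ + (h / 2) • k2)))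
    (hk4 : k4 = -(gradient E (θ + h • k3)))
    (hseg1 : ∀ s ∈ Set.Icc (0 : ℝ) (h / 2), θ + s • k1 ∈ U)
    (hseg2 : ∀ s ∈ Set.Icc (0 : ℝ) (h / 2), θ + s • k2 ∈ U)
    (hseg3 : ∀ s ∈ Set.Icc (0 : ℝ) h, θ + s • k3 ∈ U) :
    k1 = -(gradient E θ) ∧ k2 = -(gradient E θ) ∧
    k3 = -(gradient E θ) ∧ k4 = -(gradient E θ) ∧
    θ + (h / 6) • (k1 + (2 : ℝ) • k2 + (2 : ℝ) • k3 + k4) = θ - h • gradient E θ :=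
  rk4_in_corridor_general E hE U hU hcor h hh θ k1 k2 k3 k4 hk1 hk2 hk3 hk4 hseg1 hseg2 hseg3
end

section
/- Let E : ℝ → ℝ be twice continuously differentiable, v ∈ ℝ, T > 0, and suppose the straight line θ(t) = θ₀ + t v satisfies the gradient flow equation θ'(t) = -E'(θ(t)) for all t ∈ [0, T]. Then E' is constant (equal to -v) on the segment between θ₀ and θ₀ + T v, and hence E is affine on that segment: E(θ₀ + t v) = E(θ₀) - t v² for all t ∈ [0, T]. -/
open Set

theorem hasDerivAt_const_add_mul_const {𝕜 : Type*} [NontriviallyNormedField 𝕜] (x₀ v t : 𝕜) :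
    HasDerivAt (fun s : 𝕜 => x₀ + s * v) v t := by
  simpa using ((hasDerivAt_id t).mul_const v).const_add x₀

theorem eq_add_smul_of_hasDerivAt_segment {F : Type*} [NormedAddCommGroup F] [NormedSpace ℝ F]
    {f : ℝ → F} {c : F} {x₀ v T : ℝ} (hf : ∀ t ∈ Icc 0 T, HasDerivAt f c (x₀ + t * v)) :
    ∀ t ∈ Icc 0 T, f (x₀ + t * v) = f x₀ + (t * v) • c := by
  have hcomp : ∀ t ∈ Icc 0 T, HasDerivAt (fun s => f (x₀ + s * v)) (v • c) t := fun t ht =>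
    (hf t ht).scomp t (hasDerivAt_const_add_mul_const x₀ v t)
  have hlin : ∀ t, HasDerivAt (fun s : ℝ => f x₀ + (s * v) • c) (v • c) t := fun t => by
    simpa using ((hasDerivAt_mul_const v).smul_const c).const_add (f x₀)
  refine eq_of_has_deriv_right_eq (fun t ht => (hcomp t (Ico_subset_Icc_self ht)).hasDerivWithinAt)
    (fun t _ => (hlin t).hasDerivWithinAt) (fun t ht => (hcomp t ht).continuousAt.continuousWithinAt)
    (fun t _ => (hlin t).continuousAt.continuousWithinAt) (by simp)

theorem one_dim_corridor_is_linear_general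
    (E : ℝ → ℝ) (hE : ContDiff ℝ 2 E)
    (θ₀ v T : ℝ)
    (hflow : ∀ t ∈ Set.Icc (0 : ℝ) T,
      HasDerivAt (fun s : ℝ => θ₀ + s * v) (-(deriv E (θ₀ + t * v))) t) :
    (∀ t ∈ Set.Icc (0 : ℝ) T, deriv E (θ₀ + t * v) = -v) ∧
    (∀ t ∈ Set.Icc (0 : ℝ) T, E (θ₀ + t * v) = E θ₀ - t * v ^ 2) := by
  have hderiv : ∀ t ∈ Icc (0 : ℝ) T, deriv E (θ₀ + t * v) = -v := fun t ht => by
    linarith [(hflow t ht).unique (hasDerivAt_const_add_mul_const θ₀ v t)]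
  have hE' : ∀ t ∈ Icc (0 : ℝ) T, HasDerivAt E (-v) (θ₀ + t * v) := fun t ht =>
    hderiv t ht ▸ (hE.differentiable (by norm_num) _).hasDerivAt
  refine ⟨hderiv, fun t ht => ?_⟩
  rw [eq_add_smul_of_hasDerivAt_segment hE' t ht, smul_eq_mul]
  ring

/-- **In dimension one, corridors are linear pieces, Example 2.1.** Let
`E : ℝ → ℝ` be twice continuously differentiable, `v ∈ ℝ`, `T > 0`, and suppose the
straight line `θ(t) = θ₀ + t v` satisfies the gradient flow equation
`θ'(t) = -E'(θ(t))` for all `t ∈ [0, T]`. Then `E'` is constant (equal to `-v`) on the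
segment between `θ₀` and `θ₀ + T v`, and hence `E` is affine on that segment:
`E(θ₀ + t v) = E(θ₀) - t v²` for all `t ∈ [0, T]`. -/
theorem one_dim_corridor_is_linear
    (E : ℝ → ℝ) (hE : ContDiff ℝ 2 E)
    (θ₀ v T : ℝ) (hT : 0 < T)
    (hflow : ∀ t ∈ Set.Icc (0 : ℝ) T,
      HasDerivAt (fun s : ℝ => θ₀ + s * v) (-(deriv E (θ₀ + t * v))) t) :
    (∀ t ∈ Set.Icc (0 : ℝ) T, deriv E (θ₀ + t * v) = -v) ∧
    (∀ t ∈ Set.Icc (0 : ℝ) T, E (θ₀ + t * v) = E θ₀ - t * v ^ 2) :=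
  one_dim_corridor_is_linear_general E hE θ₀ v T hflow
end

section
/- Let E : ℝⁿ → ℝ be twice continuously differentiable with gradient g, and let U ⊆ ℝⁿ be an open corridor for E. Then the gradient of the squared gradient norm vanishes on U: for every θ ∈ U, ∇(‖g(·)‖²)(θ) = 0. (This is the statement that the implicit gradient-norm regularizer 2 H(θ) g(θ) = ∇‖g(θ)‖² has no effect inside corridors.) -/
open InnerProductSpace Set Filter Topology

section Hessian

variable {F : Type*} [NormedAddCommGroup F] [InnerProductSpace ℝ F] [CompleteSpace F]
  {f : F → ℝ} {x : F} {n : WithTop ℕ∞}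

theorem ContDiffAt.gradient (hf : ContDiffAt ℝ (n + 1) f x) :
    ContDiffAt ℝ n (gradient f) x :=
  (toDual ℝ F).symm.contDiff.contDiffAt.comp x hf.fderiv_right_succ

theorem inner_fderiv_gradient_comm (hf : ContDiffAt ℝ 2 f x) (u w : F) :
    ⟪fderiv ℝ (gradient f) x u, w⟫_ℝ = ⟪fderiv ℝ (gradient f) x w, u⟫_ℝ := by
  have hcomp : fderiv ℝ (gradient f) x =
      ((toDual ℝ F).symm.toContinuousLinearEquiv : (F →L[ℝ] ℝ) ≃L[ℝ] F).toContinuousLinearMap ∘L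
        fderiv ℝ (fderiv ℝ f) x := by
    rw [← ContinuousLinearEquiv.comp_fderiv]
    rfl
  have hsymm : IsSymmSndFDerivAt ℝ f x :=
    hf.isSymmSndFDerivAt (by simp [minSmoothness_of_isRCLikeNormedField])
  rw [hcomp]
  simpa using hsymm.eq u w

theorem hasGradientAt_norm_sq_gradient (hf : ContDiffAt ℝ 2 f x) :
    HasGradientAt (fun y => ‖gradient f y‖ ^ 2)
      (2 • fderiv ℝ (gradient f) x (gradient f x)) x := by
  have hg : DifferentiableAt ℝ (gradient f) x :=
    (ContDiffAt.gradient (n := 1) hf).differentiableAt one_ne_zero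
  have hdual : toDual ℝ F (2 • fderiv ℝ (gradient f) x (gradient f x)) =
      2 • (innerSL ℝ (gradient f x)).comp (fderiv ℝ (gradient f) x) := by
    ext w
    simp [inner_fderiv_gradient_comm hf _ w]
  rw [hasGradientAt_iff_hasFDerivAt, hdual]
  exact hg.hasFDerivAt.norm_sq

end Hessian

section Curves

variable {F : Type*} [NormedAddCommGroup F] [NormedSpace ℝ F]

theorem HasDerivAt.eq_of_eqOn_Icc_line {α : ℝ → F} {a b t : ℝ} {v w : F}
    (hline : ∀ s ∈ Icc a b, α s = α a + (s - a) • v) (ht : t ∈ Ioo a b)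
    (hα : HasDerivAt α w t) : w = v := by
  have hlineDeriv : HasDerivAt (fun s => α a + (s - a) • v) v t := by
    simpa using (((hasDerivAt_id t).sub_const a).smul_const v).const_add (α a)
  have heq : α =ᶠ[𝓝 t] fun s => α a + (s - a) • v :=
    eventually_of_mem (Icc_mem_nhds ht.1 ht.2) hline
  exact hα.unique (hlineDeriv.congr_of_eventuallyEq heq)

theorem ContDiffAt.exists_integralCurve_mem [CompleteSpace F] {V : F → F} {x₀ : F} {U : Set F}
    (hV : ContDiffAt ℝ 1 V x₀) (hU : U ∈ 𝓝 x₀) :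
    ∃ δ > (0 : ℝ), ∃ α : ℝ → F, α 0 = x₀ ∧
      ∀ t ∈ Icc (-δ) δ, HasDerivAt α (V (α t)) t ∧ α t ∈ U := by
  obtain ⟨α, hα0, ε, hε, hα⟩ := hV.exists_forall_mem_closedBall_exists_eq_forall_mem_Ioo_hasDerivAt₀ 0
  have hcont : ContinuousAt α 0 := (hα 0 (by simp [hε])).continuousAt
  obtain ⟨r, hr, hball⟩ := Metric.mem_nhds_iff.mp (hcont.preimage_mem_nhds (hα0 ▸ hU))
  refine ⟨min (r / 2) (ε / 2), by positivity, α, hα0, fun t ht => ⟨hα t ?_, hball ?_⟩⟩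
  · have := min_le_right (r / 2) (ε / 2)
    constructor <;> linarith [ht.1, ht.2]
  · have := min_le_left (r / 2) (ε / 2)
    rw [Metric.mem_ball, Real.dist_eq, sub_zero, abs_lt]
    constructor <;> linarith [ht.1, ht.2]

end Curves

theorem IsCorridor.fderiv_gradient_apply_gradient_eq_zero {n : ℕ}
    {E : EuclideanSpace ℝ (Fin n) → ℝ} {U : Set (EuclideanSpace ℝ (Fin n))}
    (hcor : IsCorridor E U) (hU : IsOpen U) {θ : EuclideanSpace ℝ (Fin n)} (hθ : θ ∈ U)
    (hE : ContDiffAt ℝ 2 E θ) :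
    fderiv ℝ (gradient E) θ (gradient E θ) = 0 := by
  have hg : ContDiffAt ℝ 1 (gradient E) θ := ContDiffAt.gradient hE
  obtain ⟨δ, hδ, α, hα0, hα⟩ := hg.neg.exists_integralCurve_mem (hU.mem_nhds hθ)
  obtain ⟨v, hv⟩ := hcor (-δ) δ (by linarith) α (fun t ht => (hα t ht).1) (fun t ht => (hα t ht).2)
  have h0 : (0 : ℝ) ∈ Ioo (-δ) δ := ⟨by linarith, hδ⟩
  have hconst : (fun t => gradient E (α t)) =ᶠ[𝓝 0] fun _ => -v := by
    filter_upwards [Ioo_mem_nhds h0.1 h0.2] with t ht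
    rw [← (hα t (Ioo_subset_Icc_self ht)).1.eq_of_eqOn_Icc_line hv ht, neg_neg]
  have hchain : HasDerivAt (fun t => gradient E (α t))
      (fderiv ℝ (gradient E) θ (-gradient E θ)) 0 := by
    have hgα : HasFDerivAt (gradient E) (fderiv ℝ (gradient E) θ) (α 0) :=
      hα0 ▸ (hg.differentiableAt one_ne_zero).hasFDerivAt
    have := hgα.comp_hasDerivAt 0 (hα 0 (Ioo_subset_Icc_self h0)).1
    rwa [hα0] at this
  have hHneg := hchain.unique ((hasDerivAt_const 0 (-v)).congr_of_eventuallyEq hconst)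
  rwa [map_neg, neg_eq_zero] at hHneg

/-- **No implicit gradient-norm regularization in corridors.** Let `U` be an
open corridor for a twice continuously differentiable loss `E` with gradient `g`. Then the
gradient of the squared gradient norm vanishes on `U`: for every `θ ∈ U`,
`∇(‖g(·)‖²)(θ) = 0`. (The implicit gradient-norm regularizer `2 H(θ) g(θ) = ∇‖g(θ)‖²` has
no effect inside corridors.) -/
theorem implicit_regularizer_vanishes_in_corridor {n : ℕ}
    (E : EuclideanSpace ℝ (Fin n) → ℝ) (hE : ContDiff ℝ 2 E)
    (U : Set (EuclideanSpace ℝ (Fin n))) (hU : IsOpen U) (hcor : IsCorridor E U) :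
    ∀ θ ∈ U, gradient (fun x => ‖gradient E x‖ ^ 2) θ = 0 := by
  intro θ hθ
  rw [(hasGradientAt_norm_sq_gradient hE.contDiffAt).gradient,
    hcor.fderiv_gradient_apply_gradient_eq_zero hU hθ hE.contDiffAt, smul_zero]
end
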